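/- arXiv:math/0601443 — 2 statements merged into one kernel-verified Lean document; each statement's English description precedes it below -/
import Mathlib

section
/- Let V be a linear subspace of ℝ^m that contains no nonzero vector all of whose coordinates are nonnegative. Then for every vector c ∈ ℝ^m, the set of lattice points p ∈ V ∩ ℤ^m satisfying p ≥ c (coordinatewise) is finite. -/
/-!
The unit sphere of `V` is compact and misses the closed cone of nonnegative vectors, so it keeps
a distance `ε > 0` from that cone. Comparing `v / ‖v‖` with `v⁺ / ‖v‖` gives `ε ‖v‖ ≤ ‖v⁻‖` for
`v ∈ V`, and `v ≥ c` forces `v⁻ ≤ c⁻`. Hence the points of `V` above `c` form a bounded set, which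
contains only finitely many lattice points.
-/

open Metric Bornology

instance Pi.hasSolidNorm {ι : Type*} [Fintype ι] {α : ι → Type*} [∀ i, NormedAddCommGroup (α i)]
    [∀ i, Lattice (α i)] [∀ i, HasSolidNorm (α i)] : HasSolidNorm (∀ i, α i) where
  solid _ y h := (pi_norm_le_iff_of_nonneg (norm_nonneg y)).2 fun i =>
    (norm_le_norm_of_abs_le_abs (h i)).trans (norm_le_pi_norm y i)

section

variable {E : Type*} [NormedAddCommGroup E] [Lattice E] [IsOrderedAddMonoid E] [NormedSpace ℝ E]
  [PosSMulMono ℝ E]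

theorem Submodule.exists_pos_mul_norm_le_norm_negPart [OrderClosedTopology E]
    (V : Submodule ℝ E) [FiniteDimensional ℝ V] (hV : ∀ v ∈ V, 0 ≤ v → v = 0) :
    ∃ ε > 0, ∀ v ∈ V, ε * ‖v‖ ≤ ‖v⁻‖ := by
  set S : Set E := (↑) '' sphere (0 : V) 1
  have hS : IsCompact S := (isCompact_sphere 0 1).image continuous_subtype_val
  have hdisj : Disjoint S (Set.Ici 0) := by
    rw [Set.disjoint_left]
    rintro _ ⟨u, hu, rfl⟩ hu_nonneg
    have : (u : E) = 0 := hV u u.2 hu_nonneg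
    simp_all
  obtain ⟨ε, hε, hdist⟩ := exists_pos_forall_lt_edist hS isClosed_Ici hdisj
  refine ⟨ε, hε, fun v hv => ?_⟩
  rcases eq_or_ne v 0 with rfl | hv0
  · simp
  have hv_pos : 0 < ‖v‖ := norm_pos_iff.2 hv0
  have hu : ‖v‖⁻¹ • v ∈ S := ⟨⟨_, V.smul_mem _ hv⟩, by simp [norm_smul, hv_pos.ne'], rfl⟩
  have hq : (0 : E) ≤ ‖v‖⁻¹ • v⁺ := smul_nonneg (by positivity) (posPart_nonneg v)
  have hv_sub : v - v⁺ = -v⁻ := by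
    nth_rw 1 [← posPart_sub_negPart v]
    abel
  have key := hdist _ hu _ hq
  rw [edist_nndist, ENNReal.coe_lt_coe, ← NNReal.coe_lt_coe, coe_nndist, dist_eq_norm, ← smul_sub,
    hv_sub, norm_smul, norm_neg, norm_inv, norm_norm, inv_mul_eq_div, lt_div_iff₀ hv_pos] at key
  exact key.le

theorem Submodule.isBounded_inter_Ici [HasSolidNorm E] (V : Submodule ℝ E) [FiniteDimensional ℝ V]
    (hV : ∀ v ∈ V, 0 ≤ v → v = 0) (c : E) : IsBounded ((V : Set E) ∩ Set.Ici c) := by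
  obtain ⟨ε, hε, hnorm⟩ := V.exists_pos_mul_norm_le_norm_negPart hV
  refine isBounded_iff_forall_norm_le.2 ⟨‖c⁻‖ / ε, fun v ⟨hv, hcv⟩ => ?_⟩
  have hneg : ‖v⁻‖ ≤ ‖c⁻‖ := norm_le_norm_of_abs_le_abs <| by
    simpa only [abs_of_nonneg (negPart_nonneg _)] using negPart_anti hcv
  rw [le_div_iff₀' hε]
  exact (hnorm v hv).trans hneg

end

theorem Set.finite_intCast_preimage_of_isBounded {ι : Type*} [Fintype ι] {s : Set (ι → ℝ)}
    (hs : IsBounded s) : {p : ι → ℤ | (fun i => (p i : ℝ)) ∈ s}.Finite := by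
  have hcast : Isometry (Pi.map fun _ : ι => ((↑) : ℤ → ℝ)) :=
    .piMap _ fun _ => Real.isometry_intCast
  exact (isCompact_of_isClosed_isBounded (isClosed_discrete _)
    (hcast.antilipschitz.isBounded_preimage hs)).finite_of_discrete

/-- If a linear subspace `V ⊆ ℝ^m` contains no nonzero vector all of
whose coordinates are nonnegative, then for every `c ∈ ℝ^m` the set of lattice points
`p ∈ V ∩ ℤ^m` with `p ≥ c` coordinatewise is finite. -/
theorem finite_lattice_points_of_no_nonneg_vector (m : ℕ)
    (V : Submodule ℝ (Fin m → ℝ))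
    (hV : ∀ v ∈ V, (∀ i, 0 ≤ v i) → v = 0) (c : Fin m → ℝ) :
    {p : Fin m → ℤ | (fun i => (p i : ℝ)) ∈ V ∧ ∀ i, c i ≤ (p i : ℝ)}.Finite :=
  Set.finite_intCast_preimage_of_isBounded (V.isBounded_inter_Ici hV c)
end

section
/- Let V be a linear subspace of ℝ^m. If there exists a sequence (p_j) in V ∩ ℤ^m with all p_j bounded below coordinatewise by a fixed vector and ‖p_j‖ → ∞, then V contains a nonzero vector with all coordinates nonnegative, and hence V contains a nonzero integer vector with all coordinates nonnegative. -/
/-!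
Lattice points bounded below by `⌈c⌉` are partially well-ordered (Dickson's lemma), so the
sequence has a coordinatewise monotone subsequence. As the norms tend to infinity, two terms
`p j ≤ p k` of it differ, and `p k - p j` is a nonzero nonnegative integer vector of `V`.
-/

open Filter Set

theorem exists_monotone_subseq_of_forall_le {ι : Type*} [Finite ι] {p : ℕ → ι → ℤ}
    {b : ι → ℤ} (hb : ∀ j, b ≤ p j) : ∃ g : ℕ ↪o ℕ, Monotone (p ∘ g) :=
  (IsPWO.pi fun i => (bddBelow_Ici (a := b i)).isWF.isPWO).exists_monotone_subseq
    fun j i _ => hb j i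

theorem exists_lt_of_forall_le_of_eventually_ne {ι : Type*} [Finite ι] {p : ℕ → ι → ℤ} {b : ι → ℤ}
    (hb : ∀ j, b ≤ p j) (hp : ∀ x, ∀ᶠ j in atTop, p j ≠ x) :
    ∃ j k, p j < p k := by
  obtain ⟨g, hg⟩ := exists_monotone_subseq_of_forall_le hb
  obtain ⟨k, hk⟩ := (g.strictMono.tendsto_atTop.eventually (hp (p (g 0)))).exists
  exact ⟨g 0, g k, (hg (Nat.zero_le k)).lt_of_ne' hk⟩

theorem exists_nonneg_vector_of_unbounded_bounded_below_general (m : ℕ)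
    (V : Submodule ℝ (Fin m → ℝ))
    (p : ℕ → Fin m → ℤ)
    (hmem : ∀ j, (fun i => (p j i : ℝ)) ∈ V)
    (c : Fin m → ℝ)
    (hbd : ∀ j i, c i ≤ (p j i : ℝ))
    (hnorm : Filter.Tendsto (fun j => ‖((fun i => (p j i : ℝ)) : Fin m → ℝ)‖)
      Filter.atTop Filter.atTop) :
    (∃ v ∈ V, v ≠ 0 ∧ ∀ i, 0 ≤ v i) ∧
      ∃ q : Fin m → ℤ, (fun i => (q i : ℝ)) ∈ V ∧ q ≠ 0 ∧ ∀ i, 0 ≤ q i := by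
  have hp (x : Fin m → ℤ) : ∀ᶠ j in atTop, p j ≠ x :=
    (hnorm.eventually_ne_atTop ‖fun i => (x i : ℝ)‖).mono fun j hj h => hj (by rw [h])
  obtain ⟨j, k, hlt⟩ :=
    exists_lt_of_forall_le_of_eventually_ne (b := fun i => ⌈c i⌉) (fun j i => Int.ceil_le.2 (hbd j i)) hp
  set q := p k - p j
  have hqV : (fun i => (q i : ℝ)) ∈ V := by
    convert sub_mem (hmem k) (hmem j) using 1
    ext i
    simp [q]
  have hq0 : q ≠ 0 := (sub_pos.2 hlt).ne'
  have hqnn : 0 ≤ q := (sub_pos.2 hlt).le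
  refine ⟨⟨_, hqV, fun h => hq0 (funext fun i => ?_), fun i => Int.cast_nonneg (hqnn i)⟩,
    q, hqV, hq0, hqnn⟩
  simpa using congrFun h i

/-- Let `V` be the ℝ-span of a set of integer vectors in `ℝ^m`.  If there
is a sequence of lattice points of `V`, bounded below coordinatewise by a fixed vector `c`,
whose norms tend to infinity, then `V` contains a nonzero vector with all coordinates
nonnegative, and hence a nonzero *integer* vector with all coordinates nonnegative. -/
theorem exists_nonneg_vector_of_unbounded_bounded_below (m : ℕ)
    (S : Set (Fin m → ℤ))
    (V : Submodule ℝ (Fin m → ℝ))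
    (hV : V = Submodule.span ℝ ((fun q : Fin m → ℤ => fun i => (q i : ℝ)) '' S))
    (p : ℕ → Fin m → ℤ)
    (hmem : ∀ j, (fun i => (p j i : ℝ)) ∈ V)
    (c : Fin m → ℝ)
    (hbd : ∀ j i, c i ≤ (p j i : ℝ))
    (hnorm : Filter.Tendsto (fun j => ‖((fun i => (p j i : ℝ)) : Fin m → ℝ)‖)
      Filter.atTop Filter.atTop) :
    (∃ v ∈ V, v ≠ 0 ∧ ∀ i, 0 ≤ v i) ∧
      ∃ q : Fin m → ℤ, (fun i => (q i : ℝ)) ∈ V ∧ q ≠ 0 ∧ ∀ i, 0 ≤ q i :=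
  exists_nonneg_vector_of_unbounded_bounded_below_general m V p hmem c hbd hnorm
end
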